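/- arXiv:2107.11035 — 2 statements merged into one kernel-verified Lean document; each statement's English description precedes it below -/
import Mathlib

section
/- Let u ∈ H¹₀(Ω) solve −Δu = f with u = 0 on ∂Ω, and let z ∈ H¹₀(Ω) ∩ H²(Ω) solve the adjoint problem −Δz = j in Ω, z = 0 on ∂Ω, where j ∈ L²(Ω) represents the goal functional J(v) = (j, v). Then for any u_N ∈ H¹(Ω) ∩ H²(Ω) that need not vanish on ∂Ω, the error identity J(u − u_N) = (f, z) − (∇u_N, ∇z) + ⟨∂_n z, u_N⟩_{∂Ω} holds. -/
/-!
Green's identity `(∇w, ∇φ) = (-Δw, φ) + ⟨∂ₙw, φ⟩` makes `-Δ` symmetric on zero-trace `H²`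
functions, so `J(u) = (-Δz, u) = (-Δu, z) = (f, z)`. Applied to `u_N`, whose trace need not
vanish, it gives `J(u_N) = (∇u_N, ∇z) - ⟨∂ₙz, u_N⟩`, and the boundary term survives.
-/

section GreenIdentity

variable {V B : Type*} [AddCommGroup V] [Module ℝ V] [AddCommGroup B] [Module ℝ B]
  {gip l2ip : V →ₗ[ℝ] V →ₗ[ℝ] ℝ} {binner : B →ₗ[ℝ] B →ₗ[ℝ] ℝ}
  {H2 : Set V} {tr dn : V →ₗ[ℝ] B} {negLap : V →ₗ[ℝ] V}
  (hGreen : ∀ w ∈ H2, ∀ φ : V, gip w φ = l2ip (negLap w) φ + binner (dn w) (tr φ))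
include hGreen

theorem l2ip_negLap_eq_gip_sub_boundary {w : V} (hw : w ∈ H2) (φ : V) :
    l2ip (negLap w) φ = gip w φ - binner (dn w) (tr φ) :=
  eq_sub_of_add_eq (hGreen w hw φ).symm

theorem gip_eq_l2ip_negLap_of_trace_eq_zero {w φ : V} (hw : w ∈ H2) (hφ : tr φ = 0) :
    gip w φ = l2ip (negLap w) φ := by
  rw [hGreen w hw φ, hφ, map_zero, add_zero]

theorem l2ip_negLap_comm_of_trace_eq_zero (hgsymm : ∀ u v : V, gip u v = gip v u)
    {u v : V} (hu : u ∈ H2) (hv : v ∈ H2) (hu0 : tr u = 0) (hv0 : tr v = 0) :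
    l2ip (negLap v) u = l2ip (negLap u) v := by
  rw [← gip_eq_l2ip_negLap_of_trace_eq_zero hGreen hv hu0,
    ← gip_eq_l2ip_negLap_of_trace_eq_zero hGreen hu hv0, hgsymm]

end GreenIdentity

theorem network_error_identity_laplace_general
    {V B : Type*} [AddCommGroup V] [Module ℝ V] [AddCommGroup B] [Module ℝ B]
    (gip l2ip : V →ₗ[ℝ] V →ₗ[ℝ] ℝ)
    (binner : B →ₗ[ℝ] B →ₗ[ℝ] ℝ)
    (hgsymm : ∀ u v : V, gip u v = gip v u)
    (H2 : Set V) (tr dn : V →ₗ[ℝ] B)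
    (negΔ : V →ₗ[ℝ] V)
    (hGreen : ∀ w ∈ H2, ∀ φ : V,
      gip w φ = l2ip (negΔ w) φ + binner (dn w) (tr φ))
    (u z f j : V)
    (hu2 : u ∈ H2) (hz2 : z ∈ H2)
    (hu0 : tr u = 0) (hz0 : tr z = 0)
    (hueq : negΔ u = f) (hzeq : negΔ z = j)
    (uN : V) :
    l2ip j (u - uN) = l2ip f z - gip uN z + binner (dn z) (tr uN) := by
  subst hueq hzeq
  calc l2ip (negΔ z) (u - uN) = l2ip (negΔ z) u - l2ip (negΔ z) uN := map_sub _ _ _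
    _ = l2ip (negΔ u) z - (gip z uN - binner (dn z) (tr uN)) := by
      rw [l2ip_negLap_comm_of_trace_eq_zero hGreen hgsymm hz2 hu2 hz0 hu0,
        l2ip_negLap_eq_gip_sub_boundary hGreen hz2 uN]
    _ = l2ip (negΔ u) z - gip uN z + binner (dn z) (tr uN) := by
      rw [hgsymm z uN]; ring

/-- Error identity for a nonconforming (neural network)
approximation u_N that need not vanish on the boundary:
J(u - u_N) = (f, z) - (∇u_N, ∇z) + ⟨∂ₙz, u_N⟩_{∂Ω}. -/
theorem network_error_identity_laplace
    {V B : Type*} [AddCommGroup V] [Module ℝ V] [AddCommGroup B] [Module ℝ B]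
    (gip l2ip : V →ₗ[ℝ] V →ₗ[ℝ] ℝ)
    (binner : B →ₗ[ℝ] B →ₗ[ℝ] ℝ)
    (hgsymm : ∀ u v : V, gip u v = gip v u)
    (hl2symm : ∀ u v : V, l2ip u v = l2ip v u)
    (H2 : Set V) (tr dn : V →ₗ[ℝ] B)
    (negΔ : V →ₗ[ℝ] V)
    (hGreen : ∀ w ∈ H2, ∀ φ : V,
      gip w φ = l2ip (negΔ w) φ + binner (dn w) (tr φ))
    (u z f j : V)
    (hu2 : u ∈ H2) (hz2 : z ∈ H2)
    (hu0 : tr u = 0) (hz0 : tr z = 0)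
    (hueq : negΔ u = f) (hzeq : negΔ z = j)
    (uN : V) (huN : uN ∈ H2) :
    l2ip j (u - uN) = l2ip f z - gip uN z + binner (dn z) (tr uN) :=
  network_error_identity_laplace_general gip l2ip binner hgsymm H2 tr dn negΔ hGreen u z f j hu2 hz2
    hu0 hz0 hueq hzeq uN
end

section
/- Let (v, p) solve the Stokes problem div v = 0, −Δv + ∇p = f in Ω, v = 0 on ∂Ω, and let (z, q) solve the adjoint Stokes problem div z = 0, −Δz − ∇q = j in Ω, z = 0 on ∂Ω, where j ∈ L²(Ω)² represents a goal functional J(φ) = (j, φ). Then for any v_N ∈ H¹(Ω)² ∩ H²(Ω)² (not necessarily divergence free or vanishing on ∂Ω), one has J(v − v_N) = (f, z) − (∇v_N, ∇z) − (div v_N, q) + ⟨∂_n z + q n, v_N⟩_{∂Ω}. -/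
/-! Testing the adjoint equation with `φ` and integrating by parts (Green's formula for `-Δ`,
the divergence theorem for `∇q`) gives
`(j, φ) = (∇z, ∇φ) + (q, div φ) - ⟨∂ₙz + q n, φ⟩` for every `φ`.
For `φ = v` the last two terms vanish, and the same computation for the primal problem tested
with `z` shows `(∇v, ∇z) = (f, z)`; for `φ = v_N` nothing vanishes, and subtracting gives the
identity. -/

section StokesGreen

variable {V Q B : Type*} [AddCommGroup V] [Module ℝ V] [AddCommGroup Q] [Module ℝ Q]
  [AddCommGroup B] [Module ℝ B]
  {gip l2ip : V →ₗ[ℝ] V →ₗ[ℝ] ℝ} {qip : Q →ₗ[ℝ] Q →ₗ[ℝ] ℝ} {binner : B →ₗ[ℝ] B →ₗ[ℝ] ℝ}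
  {H2 : Set V} {tr dn : V →ₗ[ℝ] B} {qn : Q →ₗ[ℝ] B}
  {negΔ : V →ₗ[ℝ] V} {gradp : Q →ₗ[ℝ] V} {dv : V →ₗ[ℝ] Q}

theorem stokes_green_formula
    (hGreen : ∀ w ∈ H2, ∀ φ : V, gip w φ = l2ip (negΔ w) φ + binner (dn w) (tr φ))
    (hIBP : ∀ (q : Q) (φ : V), l2ip (gradp q) φ = -(qip q (dv φ)) + binner (qn q) (tr φ))
    {w : V} (hw : w ∈ H2) (q : Q) (φ : V) :
    l2ip (negΔ w - gradp q) φ = gip w φ + qip q (dv φ) - binner (dn w + qn q) (tr φ) := by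
  simp only [map_sub, map_add, LinearMap.sub_apply, LinearMap.add_apply, hGreen w hw φ, hIBP]
  ring

theorem stokes_green_formula_of_div_eq_zero_of_tr_eq_zero
    (hGreen : ∀ w ∈ H2, ∀ φ : V, gip w φ = l2ip (negΔ w) φ + binner (dn w) (tr φ))
    (hIBP : ∀ (q : Q) (φ : V), l2ip (gradp q) φ = -(qip q (dv φ)) + binner (qn q) (tr φ))
    {w : V} (hw : w ∈ H2) (q : Q) {φ : V} (hdiv : dv φ = 0) (htr : tr φ = 0) :
    l2ip (negΔ w - gradp q) φ = gip w φ := by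
  rw [stokes_green_formula hGreen hIBP hw, hdiv, htr]
  simp

end StokesGreen

theorem stokes_network_error_identity_general
    {V Q B : Type*} [AddCommGroup V] [Module ℝ V] [AddCommGroup Q] [Module ℝ Q]
    [AddCommGroup B] [Module ℝ B]
    (gip l2ip : V →ₗ[ℝ] V →ₗ[ℝ] ℝ)
    (qip : Q →ₗ[ℝ] Q →ₗ[ℝ] ℝ)        -- (·,·)_{L²(Ω)} on scalar fields
    (binner : B →ₗ[ℝ] B →ₗ[ℝ] ℝ)     -- ⟨·,·⟩_{L²(∂Ω)}
    (hgsymm : ∀ u v : V, gip u v = gip v u)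
    (H2 : Set V)
    (tr dn : V →ₗ[ℝ] B)              -- trace and normal derivative
    (qn : Q →ₗ[ℝ] B)                 -- q ↦ q n on the boundary
    (negΔ : V →ₗ[ℝ] V) (gradp : Q →ₗ[ℝ] V) (dv : V →ₗ[ℝ] Q)
    (hGreen : ∀ w ∈ H2, ∀ φ : V,
      gip w φ = l2ip (negΔ w) φ + binner (dn w) (tr φ))
    (hIBP : ∀ (q : Q) (φ : V),
      l2ip (gradp q) φ = -(qip q (dv φ)) + binner (qn q) (tr φ))
    (f j v z vN : V) (p q : Q)
    (hv2 : v ∈ H2) (hz2 : z ∈ H2)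
    (hvdiv : dv v = 0) (hzdiv : dv z = 0)
    (hv0 : tr v = 0) (hz0 : tr z = 0)
    (hveq : negΔ v + gradp p = f)
    (hzeq : negΔ z - gradp q = j) :
    l2ip j (v - vN) =
      l2ip f z - gip vN z - qip q (dv vN) + binner (dn z + qn q) (tr vN) := by
  have hjv : l2ip j v = gip z v := by
    rw [← hzeq]
    exact stokes_green_formula_of_div_eq_zero_of_tr_eq_zero hGreen hIBP hz2 q hvdiv hv0
  have hfz : l2ip f z = gip v z := by
    -- the primal operator is the adjoint one with pressure `-p`
    rw [← hveq, ← sub_neg_eq_add, ← map_neg]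
    exact stokes_green_formula_of_div_eq_zero_of_tr_eq_zero hGreen hIBP hv2 (-p) hzdiv hz0
  have hjvN := stokes_green_formula hGreen hIBP hz2 q vN
  rw [hzeq] at hjvN
  rw [map_sub, hjv, hjvN, hfz, hgsymm z v, hgsymm z vN]
  ring

/-- Error identity for a nonconforming approximation v_N of the
Stokes problem:
J(v - v_N) = (f,z) - (∇v_N,∇z) - (div v_N, q) + ⟨∂ₙz + qn, v_N⟩_{∂Ω}. -/
theorem stokes_network_error_identity
    {V Q B : Type*} [AddCommGroup V] [Module ℝ V] [AddCommGroup Q] [Module ℝ Q]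
    [AddCommGroup B] [Module ℝ B]
    (gip l2ip : V →ₗ[ℝ] V →ₗ[ℝ] ℝ)
    (qip : Q →ₗ[ℝ] Q →ₗ[ℝ] ℝ)        -- (·,·)_{L²(Ω)} on scalar fields
    (binner : B →ₗ[ℝ] B →ₗ[ℝ] ℝ)     -- ⟨·,·⟩_{L²(∂Ω)}
    (hgsymm : ∀ u v : V, gip u v = gip v u)
    (hl2symm : ∀ u v : V, l2ip u v = l2ip v u)
    (H2 : Set V)
    (tr dn : V →ₗ[ℝ] B)              -- trace and normal derivative
    (qn : Q →ₗ[ℝ] B)                 -- q ↦ q n on the boundary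
    (negΔ : V →ₗ[ℝ] V) (gradp : Q →ₗ[ℝ] V) (dv : V →ₗ[ℝ] Q)
    (hGreen : ∀ w ∈ H2, ∀ φ : V,
      gip w φ = l2ip (negΔ w) φ + binner (dn w) (tr φ))
    (hIBP : ∀ (q : Q) (φ : V),
      l2ip (gradp q) φ = -(qip q (dv φ)) + binner (qn q) (tr φ))
    (f j v z vN : V) (p q : Q)
    (hv2 : v ∈ H2) (hz2 : z ∈ H2) (hvN2 : vN ∈ H2)
    (hvdiv : dv v = 0) (hzdiv : dv z = 0)
    (hv0 : tr v = 0) (hz0 : tr z = 0)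
    (hveq : negΔ v + gradp p = f)
    (hzeq : negΔ z - gradp q = j) :
    l2ip j (v - vN) =
      l2ip f z - gip vN z - qip q (dv vN) + binner (dn z + qn q) (tr vN) :=
  stokes_network_error_identity_general gip l2ip qip binner hgsymm H2 tr dn qn negΔ gradp dv hGreen
    hIBP f j v z vN p q hv2 hz2 hvdiv hzdiv hv0 hz0 hveq hzeq
end
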